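/- arXiv:1102.4169 — 2 statements merged into one kernel-verified Lean document; each statement's English description precedes it below -/
import Mathlib

section
/- Under the hypotheses above, with D = sup |∂ₜa|/a < ∞, the momentum satisfies the lower bound |ξ(t)|² ≥ |ξ₀|² (c₀/C₀) e^{−D|t−t₀|} for all t in the interval of existence; in particular ξ(t) never vanishes and the maximal solution is defined on all of ℝ. -/
open Real Set Filter Topology

/-! The energy `a(t, x) |ξ|²` is the square of the Hamiltonian `√a |ξ|`, so along the flow it can
only change through the explicit time dependence of `a`. As `a` is only separately differentiable,
we compare the log-energy near each time `t` with the log of the frozen energy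
`a(t, x(z)) |ξ(z)|²`, which is stationary at `z = t`; since `|∂ₜ log a| ≤ D`, the two differ by at
most `D |z - t|`. A Dini-derivative form of the mean value inequality then makes the log-energy
`D`-Lipschitz on the interval of existence, and `c₀ ≤ a ≤ C₀` turns this into the bound on `|ξ|²`.
-/

section LipschitzModStationary

variable {f g : ℝ → ℝ} {C t : ℝ}

lemma continuousAt_of_abs_sub_le_add (hg : ContinuousAt g t)
    (h : ∀ z, |f z - f t| ≤ C * |z - t| + |g z - g t|) : ContinuousAt f t := by
  have hlim : Tendsto (fun z => C * |z - t| + |g z - g t|) (𝓝 t) (𝓝 0) := by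
    have hid : Tendsto (fun z => C * |z - t|) (𝓝 t) (𝓝 0) := by
      simpa using ((continuous_id.sub (continuous_const (y := t))).abs.const_mul C).tendsto t
    have hgt : Tendsto (fun z => |g z - g t|) (𝓝 t) (𝓝 0) := by
      simpa using (hg.sub (continuousAt_const (y := g t))).abs.tendsto
    simpa using hid.add hgt
  exact tendsto_iff_dist_tendsto_zero.2 <|
    squeeze_zero (fun _ => dist_nonneg) (fun z => (h z).trans_eq' (Real.dist_eq _ _)) hlim

lemma eventually_slope_lt_of_abs_sub_le_add (hg : HasDerivAt g 0 t)
    (h : ∀ z, |f z - f t| ≤ C * |z - t| + |g z - g t|) {r : ℝ} (hr : C < r) :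
    ∀ᶠ z in 𝓝[>] t, slope f t z < r := by
  have hgslope : ∀ᶠ z in 𝓝[>] t, |slope g t z| < r - C := by
    have hlim := (hasDerivAt_iff_tendsto_slope.1 hg).abs
    rw [abs_zero] at hlim
    exact nhdsGT_le_nhdsNE t (hlim.eventually_lt_const (sub_pos.2 hr))
  filter_upwards [hgslope, self_mem_nhdsWithin] with z hz hzt
  have hzt : 0 < z - t := sub_pos.2 hzt
  calc slope f t z = (f z - f t) / (z - t) := slope_def_field f t z
    _ ≤ (C * (z - t) + |g z - g t|) / (z - t) := by
        gcongr
        exact (le_abs_self _).trans ((h z).trans_eq (by rw [abs_of_pos hzt]))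
    _ = C + |slope g t z| := by
        rw [slope_def_field, abs_div, abs_of_pos hzt]
        field_simp
    _ < r := by linarith

lemma sub_le_mul_sub_of_abs_sub_le_add {p q : ℝ} (hpq : p ≤ q)
    (h : ∀ t ∈ Icc p q, ∃ g : ℝ → ℝ, HasDerivAt g 0 t ∧
      ∀ z, |f z - f t| ≤ C * |z - t| + |g z - g t|) :
    f q - f p ≤ C * (q - p) := by
  have hcont : ContinuousOn f (Icc p q) := fun t ht => by
    obtain ⟨g, hg, hfg⟩ := h t ht
    exact (continuousAt_of_abs_sub_le_add hg.continuousAt hfg).continuousWithinAt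
  have hslope : ∀ t ∈ Ico p q, ∀ r, C < r → ∃ᶠ z in 𝓝[>] t, slope f t z < r :=
    fun t ht r hr => by
      obtain ⟨g, hg, hfg⟩ := h t (Ico_subset_Icc_self ht)
      exact (eventually_slope_lt_of_abs_sub_le_add hg hfg hr).frequently
  have hline : ∀ z, HasDerivAt (fun z => f p + C * (z - p)) C z := fun z => by
    simpa using ((hasDerivAt_id z).sub_const p).const_mul C |>.const_add (f p)
  have := image_le_of_liminf_slope_right_le_deriv_boundary hcont (by simp) (by fun_prop)
    (fun z _ => (hline z).hasDerivWithinAt) hslope (right_mem_Icc.2 hpq)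
  linarith

theorem abs_sub_le_mul_abs_sub_of_abs_sub_le_add {s : Set ℝ} (hs : s.OrdConnected)
    (h : ∀ t ∈ s, ∃ g : ℝ → ℝ, HasDerivAt g 0 t ∧
      ∀ z, |f z - f t| ≤ C * |z - t| + |g z - g t|)
    {p q : ℝ} (hp : p ∈ s) (hq : q ∈ s) : |f q - f p| ≤ C * |q - p| := by
  wlog hpq : p ≤ q generalizing p q
  · rw [abs_sub_comm, abs_sub_comm q]
    exact this hq hp (le_of_not_ge hpq)
  have hIcc : ∀ t ∈ Icc p q, ∃ g : ℝ → ℝ, HasDerivAt g 0 t ∧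
      ∀ z, |f z - f t| ≤ C * |z - t| + |g z - g t| := fun t ht => h t (hs.out hp hq ht)
  have hneg : ∀ t ∈ Icc p q, ∃ g : ℝ → ℝ, HasDerivAt g 0 t ∧
      ∀ z, |(-f) z - (-f) t| ≤ C * |z - t| + |g z - g t| := fun t ht => by
    simpa only [Pi.neg_apply, neg_sub_neg, abs_sub_comm (f t)] using hIcc t ht
  rw [abs_of_nonneg (sub_nonneg.2 hpq), abs_le]
  constructor
  · simpa using sub_le_mul_sub_of_abs_sub_le_add hpq hneg
  · exact sub_le_mul_sub_of_abs_sub_le_add hpq hIcc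

end LipschitzModStationary

lemma abs_log_sub_log_le_of_abs_deriv_div_le {f f' : ℝ → ℝ} {D : ℝ} (hpos : ∀ t, 0 < f t)
    (hf : ∀ t, HasDerivAt f (f' t) t) (hD : ∀ t, |f' t| / f t ≤ D) (s z : ℝ) :
    |log (f z) - log (f s)| ≤ D * |z - s| :=
  convex_univ.norm_image_sub_le_of_norm_hasDerivWithin_le (f := fun t => log (f t))
    (fun t _ => ((hf t).log (hpos t).ne').hasDerivWithinAt)
    (fun t _ => by rw [Real.norm_eq_abs, abs_div, abs_of_pos (hpos t)]; exact hD t)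
    trivial trivial

lemma hasDerivAt_mul_norm_sq_zero_of_hamiltonian {F : Type*} [NormedAddCommGroup F]
    [InnerProductSpace ℝ F] [CompleteSpace F] {b : F → ℝ} {G : F} {x ξ : ℝ → F} {t : ℝ}
    (hb : HasGradientAt b G (x t)) (hbpos : 0 < b (x t)) (hξt : ξ t ≠ 0)
    (hx : HasDerivAt x (-(√(b (x t)) / ‖ξ t‖) • ξ t) t)
    (hξ : HasDerivAt ξ ((‖ξ t‖ / (2 * √(b (x t)))) • G) t) :
    HasDerivAt (fun z => b (x z) * ‖ξ z‖ ^ 2) 0 t := by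
  have hbx := hb.hasFDerivAt.comp_hasDerivAt t hx
  have hnorm := hξ.inner ℝ hξ
  simp only [real_inner_self_eq_norm_sq] at hnorm
  refine (hbx.fun_mul hnorm).congr_deriv ?_
  simp only [Function.comp_apply, InnerProductSpace.toDual_apply_apply, real_inner_smul_right,
    real_inner_smul_left, real_inner_comm (ξ t) G]
  have hν : 0 < ‖ξ t‖ := norm_pos_iff.2 hξt
  have hs : 0 < √(b (x t)) := Real.sqrt_pos.2 hbpos
  rw [← Real.mul_self_sqrt hbpos.le]
  field_simp
  rw [Real.sqrt_sq hs.le]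
  ring

lemma abs_log_mul_sub_log_mul_le {u v : ℝ} (hu : u ≠ 0) (hv : v ≠ 0) (w : ℝ) :
    |log (u * w) - log (v * w)| ≤ |log u - log v| := by
  rcases eq_or_ne w 0 with rfl | hw
  · simp
  · rw [log_mul hu hw, log_mul hv hw, add_sub_add_right_eq_sub]

lemma mul_exp_neg_mul_le_of_abs_log_sub_le {u v D d : ℝ} (hu : 0 < u) (hv : 0 < v)
    (h : |log v - log u| ≤ D * d) : u * exp (-D * d) ≤ v := by
  rw [← exp_log hu, ← exp_add, ← exp_log hv]
  exact exp_le_exp.2 (by linarith [neg_abs_le (log v - log u)])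

lemma exists_hasDerivAt_zero_abs_log_energy_sub_le {F : Type*} [NormedAddCommGroup F]
    [InnerProductSpace ℝ F] [CompleteSpace F] {a a_t : ℝ → F → ℝ} {G : F} {x ξ : ℝ → F}
    {D t : ℝ} (hpos : ∀ t y, 0 < a t y)
    (hat : ∀ y t, HasDerivAt (fun s => a s y) (a_t t y) t) (hD : ∀ t y, |a_t t y| / a t y ≤ D)
    (hgrad : HasGradientAt (a t) G (x t)) (hξt : ξ t ≠ 0)
    (hx : HasDerivAt x (-(√(a t (x t)) / ‖ξ t‖) • ξ t) t)
    (hξ : HasDerivAt ξ ((‖ξ t‖ / (2 * √(a t (x t)))) • G) t) :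
    ∃ g : ℝ → ℝ, HasDerivAt g 0 t ∧ ∀ z,
      |log (a z (x z) * ‖ξ z‖ ^ 2) - log (a t (x t) * ‖ξ t‖ ^ 2)| ≤ D * |z - t| + |g z - g t| := by
  refine ⟨fun z => log (a t (x z) * ‖ξ z‖ ^ 2), ?_, fun z => ?_⟩
  · have hfrozen := hasDerivAt_mul_norm_sq_zero_of_hamiltonian hgrad (hpos t (x t)) hξt hx hξ
    simpa using hfrozen.log (by have := hpos t (x t); positivity)
  · have hcompare : |log (a z (x z) * ‖ξ z‖ ^ 2) - log (a t (x z) * ‖ξ z‖ ^ 2)| ≤ D * |z - t| :=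
      (abs_log_mul_sub_log_mul_le (hpos z (x z)).ne' (hpos t (x z)).ne' _).trans
        (abs_log_sub_log_le_of_abs_deriv_div_le (fun s => hpos s (x z)) (hat (x z))
          (fun s => hD s (x z)) t z)
    exact (abs_sub_le _ _ _).trans (add_le_add hcompare le_rfl)

theorem stmt8_general {n : ℕ} (a a_t : ℝ → EuclideanSpace ℝ (Fin n) → ℝ)
    (c₀ C₀ D : ℝ) (hc₀ : 0 < c₀)
    (ha : ∀ t y, c₀ ≤ a t y ∧ a t y ≤ C₀)
    (hat : ∀ (y : EuclideanSpace ℝ (Fin n)) (t : ℝ),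
      HasDerivAt (fun s => a s y) (a_t t y) t)
    (hD : ∀ t y, |a_t t y| / a t y ≤ D)
    (grada : ℝ → EuclideanSpace ℝ (Fin n) → EuclideanSpace ℝ (Fin n))
    (hgrad : ∀ t y, HasGradientAt (a t) (grada t y) y)
    (J : Set ℝ) (hJ : J.OrdConnected) (t₀ : ℝ) (ht₀ : t₀ ∈ J)
    (x ξ : ℝ → EuclideanSpace ℝ (Fin n)) (hξ0 : ∀ t ∈ J, ξ t ≠ 0)
    (hx : ∀ t ∈ J, HasDerivAt x (-(Real.sqrt (a t (x t)) / ‖ξ t‖) • ξ t) t)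
    (hξ : ∀ t ∈ J,
      HasDerivAt ξ ((‖ξ t‖ / (2 * Real.sqrt (a t (x t)))) • grada t (x t)) t) :
    ∀ t ∈ J, ‖ξ t‖ ^ 2 ≥ ‖ξ t₀‖ ^ 2 * (c₀ / C₀) * Real.exp (-D * |t - t₀|) ∧
      ξ t ≠ 0 := by
  have hpos : ∀ t y, 0 < a t y := fun t y => hc₀.trans_le (ha t y).1
  set E : ℝ → ℝ := fun t => a t (x t) * ‖ξ t‖ ^ 2
  have hlogE : ∀ t ∈ J, ∃ g : ℝ → ℝ, HasDerivAt g 0 t ∧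
      ∀ z, |log (E z) - log (E t)| ≤ D * |z - t| + |g z - g t| := fun t ht =>
    exists_hasDerivAt_zero_abs_log_energy_sub_le hpos hat hD (hgrad t (x t)) (hξ0 t ht)
      (hx t ht) (hξ t ht)
  intro t ht
  refine ⟨?_, hξ0 t ht⟩
  have hEpos : ∀ s ∈ J, 0 < E s := fun s hs => by
    have := hpos s (x s); have := hξ0 s hs; positivity
  have hdecay : E t₀ * exp (-D * |t - t₀|) ≤ E t :=
    mul_exp_neg_mul_le_of_abs_log_sub_le (hEpos t₀ ht₀) (hEpos t ht)
      (abs_sub_le_mul_abs_sub_of_abs_sub_le_add hJ hlogE ht₀ ht)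
  have hC₀ : 0 < C₀ := hc₀.trans_le ((ha t₀ (x t₀)).1.trans (ha t₀ (x t₀)).2)
  rw [ge_iff_le, mul_div_assoc', div_mul_eq_mul_div, div_le_iff₀ hC₀]
  have hlower : c₀ * ‖ξ t₀‖ ^ 2 ≤ E t₀ :=
    mul_le_mul_of_nonneg_right (ha t₀ (x t₀)).1 (by positivity)
  have hupper : E t ≤ C₀ * ‖ξ t‖ ^ 2 :=
    mul_le_mul_of_nonneg_right (ha t (x t)).2 (by positivity)
  calc ‖ξ t₀‖ ^ 2 * c₀ * exp (-D * |t - t₀|)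
      = c₀ * ‖ξ t₀‖ ^ 2 * exp (-D * |t - t₀|) := by ring
    _ ≤ E t₀ * exp (-D * |t - t₀|) := by gcongr
    _ ≤ E t := hdecay
    _ ≤ ‖ξ t‖ ^ 2 * C₀ := by linarith

theorem stmt8 {n : ℕ} (a a_t : ℝ → EuclideanSpace ℝ (Fin n) → ℝ)
    (c₀ C₀ D : ℝ) (hc₀ : 0 < c₀)
    (ha : ∀ t y, c₀ ≤ a t y ∧ a t y ≤ C₀)
    (hat : ∀ (y : EuclideanSpace ℝ (Fin n)) (t : ℝ),
      HasDerivAt (fun s => a s y) (a_t t y) t)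
    (hD : ∀ t y, |a_t t y| / a t y ≤ D)
    (grada : ℝ → EuclideanSpace ℝ (Fin n) → EuclideanSpace ℝ (Fin n))
    (hgrad : ∀ t y, HasGradientAt (a t) (grada t y) y)
    (J : Set ℝ) (hJ : J.OrdConnected) (t₀ : ℝ) (ht₀ : t₀ ∈ J)
    (x ξ : ℝ → EuclideanSpace ℝ (Fin n)) (hξ0 : ∀ t ∈ J, ξ t ≠ 0)
    (hξ₀ : ξ t₀ ≠ 0)
    (hx : ∀ t ∈ J, HasDerivAt x (-(Real.sqrt (a t (x t)) / ‖ξ t‖) • ξ t) t)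
    (hξ : ∀ t ∈ J,
      HasDerivAt ξ ((‖ξ t‖ / (2 * Real.sqrt (a t (x t)))) • grada t (x t)) t) :
    ∀ t ∈ J, ‖ξ t‖ ^ 2 ≥ ‖ξ t₀‖ ^ 2 * (c₀ / C₀) * Real.exp (-D * |t - t₀|) ∧
      ξ t ≠ 0 :=
  stmt8_general a a_t c₀ C₀ D hc₀ ha hat hD grada hgrad J hJ t₀ ht₀ x ξ hξ0 hx hξ
end

section
/- Let φ : ℝ → ℝ be a real-valued C¹ function satisfying φ'(t) ≤ −α < 0 for all t ≥ t₀. If x : [t₀,∞) → ℝⁿ is C¹ with d(|x(t)|²)/dt = −2a(t,x(t)) φ(t) for a function a bounded below by C₀ > 0 and above, and |x(t₀)| ≤ ρ, then |x(t)|² ≥ α C₀ (t−t₀)² − C₁ ρ (t−t₀) − ρ² for suitable constants, so |x(t)| → ∞ as t → ∞; in particular for each R > ρ there exists T_R > 0, independent of the initial data, with |x(t)| > R for t − t₀ > T_R. -/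
/-!
Since `φ' ≤ -α`, `φ` decreases at least linearly: `φ t ≤ |φ t₀| - α (t - t₀)`. Feeding this
into `d‖x‖²/dt = -2 a φ` with `C₀ ≤ a ≤ C₀'` gives `d‖x‖²/dt ≥ 2 α C₀ (t - t₀) - K` for a
constant `K`, and integrating yields a lower bound on `‖x t‖²` that grows quadratically in `t`,
so `‖x t‖` eventually exceeds any given radius.
-/

open Filter

lemma sub_le_sub_of_hasDerivAt_le {f g f' g' : ℝ → ℝ} {t₀ : ℝ}
    (hf : ∀ t ≥ t₀, HasDerivAt f (f' t) t) (hg : ∀ t ≥ t₀, HasDerivAt g (g' t) t)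
    (hle : ∀ t ≥ t₀, f' t ≤ g' t) {t : ℝ} (ht : t₀ ≤ t) :
    f t - f t₀ ≤ g t - g t₀ := by
  have hderiv : ∀ s ≥ t₀, HasDerivAt (fun s => g s - f s) (g' s - f' s) s :=
    fun s hs => (hg s hs).sub (hf s hs)
  have hmono : MonotoneOn (fun s => g s - f s) (Set.Ici t₀) := by
    refine monotoneOn_of_hasDerivWithinAt_nonneg (f' := fun s => g' s - f' s) (convex_Ici t₀)
      (fun s hs => (hderiv s hs).continuousAt.continuousWithinAt) ?_ ?_ <;>
      rw [interior_Ici] <;> intro s hs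
    · exact (hderiv s (hs.le)).hasDerivWithinAt
    · exact sub_nonneg.2 (hle s (hs.le))
  have := hmono Set.self_mem_Ici ht ht
  simp only at this
  linarith

lemma le_sub_mul_of_hasDerivAt_le {φ φ' : ℝ → ℝ} {t₀ α : ℝ}
    (hφ : ∀ t ≥ t₀, HasDerivAt φ (φ' t) t) (hφ' : ∀ t ≥ t₀, φ' t ≤ -α) {t : ℝ} (ht : t₀ ≤ t) :
    φ t ≤ φ t₀ - α * (t - t₀) := by
  have hlin : ∀ s ≥ t₀, HasDerivAt (fun s => -α * (s - t₀)) (-α) s := fun s _ => by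
    simpa using ((hasDerivAt_id s).sub_const t₀).const_mul (-α)
  have := sub_le_sub_of_hasDerivAt_le hφ hlin hφ' ht
  simp only [sub_self, mul_zero] at this
  linarith

/-- Use `c ≤ a` when `p ≤ 0`; when `p > 0`, use `a ≤ C` together with `u < M`. -/
lemma mul_sub_le_neg_mul_of_mem_Icc {a c C p u M : ℝ} (ha : a ∈ Set.Icc c C) (hc : 0 ≤ c)
    (hu : 0 ≤ u) (hM : 0 ≤ M) (hp : p ≤ M - u) :
    c * u - (c + C) * M ≤ -(a * p) := by
  obtain ⟨hca, haC⟩ := ha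
  rcases le_or_gt p 0 with hp0 | hp0
  · nlinarith [mul_le_mul_of_nonpos_right hca hp0]
  · nlinarith [mul_le_mul_of_nonneg_right haC hp0.le]

lemma hasDerivAt_quadratic (A K t₀ t : ℝ) :
    HasDerivAt (fun s => A * (s - t₀) ^ 2 - K * (s - t₀)) (A * (2 * (t - t₀)) - K) t := by
  have hlin := (hasDerivAt_id' t).sub_const t₀
  refine (((hlin.pow 2).const_mul A).sub (hlin.const_mul K)).congr_deriv ?_
  ring

lemma exists_pos_forall_lt_quadratic {A : ℝ} (hA : 0 < A) (B D E : ℝ) :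
    ∃ T > (0 : ℝ), ∀ s > T, E < A * s ^ 2 - B * s - D := by
  have hlin : Tendsto (fun s : ℝ => A * s + -B) atTop atTop :=
    tendsto_atTop_add_const_right _ _ (tendsto_id.const_mul_atTop hA)
  have hquad : Tendsto (fun s : ℝ => s * (A * s + -B) + -D) atTop atTop :=
    tendsto_atTop_add_const_right _ _ (tendsto_id.atTop_mul_atTop₀ hlin)
  obtain ⟨T, hT⟩ := eventually_atTop.1 (hquad.eventually_gt_atTop E)
  refine ⟨max T 1, by positivity, fun s hs => ?_⟩
  have := hT s ((le_max_left T 1).trans hs.le)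
  linarith

theorem stmt9_general {n : ℕ} (α ρ C₀ C₀' : ℝ) (hα : 0 < α) (hρ : 0 < ρ) (hC₀ : 0 < C₀)
    (a : ℝ → EuclideanSpace ℝ (Fin n) → ℝ)
    (ha : ∀ t y, C₀ ≤ a t y ∧ a t y ≤ C₀')
    (t₀ : ℝ) (φ φ' : ℝ → ℝ)
    (hφ : ∀ t ≥ t₀, HasDerivAt φ (φ' t) t) (hφ' : ∀ t ≥ t₀, φ' t ≤ -α)
    (x : ℝ → EuclideanSpace ℝ (Fin n))
    (hx : ∀ t ≥ t₀, HasDerivAt (fun s => ‖x s‖ ^ 2) (-2 * a t (x t) * φ t) t) :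
    ∃ C₁ > (0 : ℝ),
      (∀ t ≥ t₀, ‖x t‖ ^ 2 ≥ α * C₀ * (t - t₀) ^ 2 - C₁ * ρ * (t - t₀) - ρ ^ 2) ∧
      ∀ R > ρ, ∃ TR > (0 : ℝ), ∀ t : ℝ, t - t₀ > TR → ‖x t‖ > R := by
  set K := 2 * (C₀ + C₀') * |φ t₀|
  have hderiv_ge : ∀ t ≥ t₀, α * C₀ * (2 * (t - t₀)) - K ≤ -2 * a t (x t) * φ t := by
    intro t ht
    have := mul_sub_le_neg_mul_of_mem_Icc (ha t (x t)) hC₀.le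
      (mul_nonneg hα.le (sub_nonneg.2 ht)) (abs_nonneg (φ t₀))
      ((le_sub_mul_of_hasDerivAt_le hφ hφ' ht).trans (by gcongr; exact le_abs_self _))
    linarith
  have hgrowth : ∀ t ≥ t₀, α * C₀ * (t - t₀) ^ 2 - K * (t - t₀) ≤ ‖x t‖ ^ 2 := by
    intro t ht
    have := sub_le_sub_of_hasDerivAt_le (fun s _ => hasDerivAt_quadratic _ _ _ s) hx hderiv_ge ht
    simp only [sub_self] at this
    nlinarith [norm_nonneg (x t₀)]
  have hK : K ≤ (K / ρ + 1) * ρ := by rw [add_mul, div_mul_cancel₀ _ hρ.ne']; linarith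
  have hbound : ∀ t ≥ t₀, ‖x t‖ ^ 2 ≥ α * C₀ * (t - t₀) ^ 2 - (K / ρ + 1) * ρ * (t - t₀) - ρ ^ 2 :=
    fun t ht => by nlinarith [hgrowth t ht, mul_le_mul_of_nonneg_right hK (sub_nonneg.2 ht)]
  have hK0 : 0 ≤ K := by
    have := ha t₀ 0
    have : 0 ≤ C₀ + C₀' := by linarith
    positivity
  refine ⟨K / ρ + 1, by positivity, hbound, fun R _ => ?_⟩
  obtain ⟨T, hT, hTR⟩ :=
    exists_pos_forall_lt_quadratic (mul_pos hα hC₀) ((K / ρ + 1) * ρ) (ρ ^ 2) (R ^ 2)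
  refine ⟨T, hT, fun t ht => ?_⟩
  have hsq : R ^ 2 < ‖x t‖ ^ 2 := (hTR _ ht).trans_le (hbound t (by linarith))
  exact lt_of_pow_lt_pow_left₀ 2 (norm_nonneg _) hsq

theorem stmt9 {n : ℕ} (α ρ C₀ C₀' : ℝ) (hα : 0 < α) (hρ : 0 < ρ) (hC₀ : 0 < C₀)
    (a : ℝ → EuclideanSpace ℝ (Fin n) → ℝ)
    (ha : ∀ t y, C₀ ≤ a t y ∧ a t y ≤ C₀')
    (t₀ : ℝ) (φ φ' : ℝ → ℝ)
    (hφ : ∀ t ≥ t₀, HasDerivAt φ (φ' t) t) (hφ' : ∀ t ≥ t₀, φ' t ≤ -α)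
    (x : ℝ → EuclideanSpace ℝ (Fin n))
    (hx : ∀ t ≥ t₀, HasDerivAt (fun s => ‖x s‖ ^ 2) (-2 * a t (x t) * φ t) t)
    (hx₀ : ‖x t₀‖ ≤ ρ) :
    ∃ C₁ > (0 : ℝ),
      (∀ t ≥ t₀, ‖x t‖ ^ 2 ≥ α * C₀ * (t - t₀) ^ 2 - C₁ * ρ * (t - t₀) - ρ ^ 2) ∧
      ∀ R > ρ, ∃ TR > (0 : ℝ), ∀ t : ℝ, t - t₀ > TR → ‖x t‖ > R :=
  stmt9_general α ρ C₀ C₀' hα hρ hC₀ a ha t₀ φ φ' hφ hφ' x hx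
end
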